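/- Let G be a finitely generated abelian group and g ∈ G a torsion element, and let p be a prime. Writing the p-primary parts with exponent multisets I(G(p)) and I((G/ℤg)(p)), the symmetric-difference exponents interleave: if I((G/ℤg)(p)) \ (I((G/ℤg)(p)) ∩ I(G(p))) = {a_1 > a_2 > ...} and I(G(p)) \ (I((G/ℤg)(p)) ∩ I(G(p))) = {b_1 > b_2 > ...}, then b_1 > a_1 > b_2 > a_2 > ... . -/

import Mathlib

/-- `S` is the multiset of exponents of the finite abelian `p`-group `A`, i.e.
`A ≅ ⊕_{m ∈ S} ℤ/p^mℤ` with all exponents `≥ 1`. -/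
def IsExpMultiset (p : ℕ) (A : Type*) [AddCommGroup A] (S : Multiset ℕ) : Prop :=
  (∀ m ∈ S, 1 ≤ m) ∧
    ∃ l : List ℕ, (l : Multiset ℕ) = S ∧
      Nonempty (A ≃+ ((i : Fin l.length) → ZMod (p ^ l.get i)))

/-- The elements of a multiset of naturals listed in (weakly) decreasing order. -/
def sortDesc (s : Multiset ℕ) : List ℕ := (s.sort (· ≤ ·)).reverse

/-- The interleaving condition `(**)`: for (decreasingly sorted) lists
`bs = [b₁, b₂, …]` and `as = [a₁, a₂, …]`, one has `b₁ > a₁ > b₂ > a₂ > ⋯`. -/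
def Interleave (bs as : List ℕ) : Prop :=
  as.length ≤ bs.length ∧ bs.length ≤ as.length + 1 ∧
    (∀ i < as.length, as.getD i 0 < bs.getD i 0) ∧
    (∀ i, i + 1 < bs.length → bs.getD (i + 1) 0 < as.getD i 0)

/-!
If `A` is a finite abelian `p`-group with exponent multiset `S`, then
`|p^k A| = p^(∑ (m - k))` (truncated subtraction), so the number of exponents `> k` is read off
from `|p^k A| / |p^(k+1) A|`.

Since `g` is torsion, `G(p)` maps onto `(G/ℤg)(p)`, with kernel `K` inside the cyclic group
`ℤg`. Counting orders gives `|p^k G(p)| = |p^k (G/ℤg)(p)| · |K ∩ p^k G(p)|`, and because `K` is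
cyclic and `p • (K ∩ p^k G(p)) ⊆ K ∩ p^(k+1) G(p)`, the last factor decreases from `k` to
`k + 1`, but by a factor at most `p`. Hence, for every `k`, `G(p)` has as many exponents `≥ k` as
`(G/ℤg)(p)`, or one more. After cancelling the common exponents, this says exactly that the
decreasingly sorted leftovers interleave, starting with one from `G(p)`.
-/

open Function AddSubgroup

theorem List.lt_countP_le_iff_of_pairwise_ge {l : List ℕ} (hl : l.Pairwise (· ≥ ·)) (k i : ℕ) :
    i < l.countP (k ≤ ·) ↔ i < l.length ∧ k ≤ l.getD i 0 := by
  induction l generalizing i with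
  | nil => simp
  | cons x t ih =>
    obtain ⟨hxt, ht⟩ := List.pairwise_cons.mp hl
    by_cases hkx : k ≤ x
    · cases i with
      | zero => simp [hkx]
      | succ i => simp [hkx, ih ht i]
    · have hlt : ∀ y ∈ x :: t, y < k := fun y hy => by
        rcases List.mem_cons.mp hy with rfl | hy
        exacts [Nat.lt_of_not_le hkx, (hxt y hy).trans_lt (Nat.lt_of_not_le hkx)]
      rw [List.countP_eq_zero.mpr fun y hy => by simpa using hlt y hy]
      refine ⟨fun h => absurd h (Nat.not_lt_zero i), fun ⟨hi, hk⟩ => ?_⟩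
      rw [List.getD_eq_getElem _ _ hi] at hk
      exact absurd (hlt _ (List.getElem_mem hi)) (Nat.not_lt.mpr hk)

theorem coe_sortDesc (S : Multiset ℕ) : ((sortDesc S : List ℕ) : Multiset ℕ) = S := by
  rw [sortDesc, Multiset.coe_reverse, Multiset.sort_eq]

theorem length_sortDesc (S : Multiset ℕ) : (sortDesc S).length = S.card := by
  rw [sortDesc, List.length_reverse, Multiset.length_sort]

theorem getD_sortDesc_mem {S : Multiset ℕ} {i : ℕ} (hi : i < (sortDesc S).length) :
    (sortDesc S).getD i 0 ∈ S := by
  have h := Multiset.mem_coe.mpr (List.getElem_mem hi)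
  rw [coe_sortDesc] at h
  rwa [List.getD_eq_getElem _ _ hi]

theorem lt_countP_le_iff_sortDesc (S : Multiset ℕ) (k i : ℕ) :
    i < S.countP (k ≤ ·) ↔ i < (sortDesc S).length ∧ k ≤ (sortDesc S).getD i 0 := by
  conv_lhs => rw [← coe_sortDesc S, Multiset.coe_countP]
  exact List.lt_countP_le_iff_of_pairwise_ge
    (List.pairwise_reverse.mpr (Multiset.pairwise_sort S _)) k i

theorem interleave_sortDesc_of_countP_le {N M : Multiset ℕ} (hNM : Disjoint N M)
    (h : ∀ k, M.countP (k ≤ ·) ≤ N.countP (k ≤ ·) ∧ N.countP (k ≤ ·) ≤ M.countP (k ≤ ·) + 1) :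
    Interleave (sortDesc N) (sortDesc M) := by
  have hcard : ∀ S : Multiset ℕ, S.countP (0 ≤ ·) = (sortDesc S).length := fun S => by
    rw [length_sortDesc, Multiset.countP_eq_card]
    exact fun _ _ => Nat.zero_le _
  refine ⟨?_, ?_, fun i hi => ?_, fun i hi => ?_⟩
  · simpa only [hcard] using (h 0).1
  · simpa only [hcard] using (h 0).2
  · have haM := getD_sortDesc_mem hi
    have hiM := (lt_countP_le_iff_sortDesc M _ i).2 ⟨hi, le_rfl⟩
    generalize (sortDesc M).getD i 0 = a at haM hiM ⊢
    obtain ⟨hiN, hab⟩ := (lt_countP_le_iff_sortDesc N a i).1 (hiM.trans_le (h a).1)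
    exact hab.lt_of_ne fun he => Multiset.disjoint_left.mp hNM (he ▸ getD_sortDesc_mem hiN) haM
  · have hbN := getD_sortDesc_mem hi
    have hiN := (lt_countP_le_iff_sortDesc N _ (i + 1)).2 ⟨hi, le_rfl⟩
    generalize (sortDesc N).getD (i + 1) 0 = b at hbN hiN ⊢
    obtain ⟨hiM, hba⟩ := (lt_countP_le_iff_sortDesc M b i).1 (by have := (h b).2; omega)
    exact hba.lt_of_ne fun he => Multiset.disjoint_left.mp hNM hbN (he ▸ getD_sortDesc_mem hiM)

theorem interleave_sortDesc_sub_of_countP_le {S T : Multiset ℕ}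
    (h : ∀ k, T.countP (k ≤ ·) ≤ S.countP (k ≤ ·) ∧ S.countP (k ≤ ·) ≤ T.countP (k ≤ ·) + 1) :
    Interleave (sortDesc (S - T)) (sortDesc (T - S)) := by
  have hdisj : Disjoint (S - T) (T - S) := Multiset.disjoint_left.mpr fun {a} ha hb => by
    rw [← Multiset.count_pos, Multiset.count_sub] at ha hb
    omega
  refine interleave_sortDesc_of_countP_le hdisj fun k => ?_
  have hS := congrArg (Multiset.countP (k ≤ ·)) (Multiset.sub_add_inter S T)
  have hT := congrArg (Multiset.countP (k ≤ ·)) (Multiset.sub_add_inter T S)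
  rw [Multiset.countP_add] at hS hT
  rw [Multiset.inter_comm] at hT
  have := h k
  omega

theorem Multiset.sum_map_tsub_eq_add_countP (S : Multiset ℕ) (k : ℕ) :
    (S.map (· - k)).sum = (S.map (· - (k + 1))).sum + S.countP (k + 1 ≤ ·) := by
  induction S using Multiset.induction_on with
  | empty => simp
  | cons a S ih =>
    simp only [Multiset.map_cons, Multiset.sum_cons, Multiset.countP_cons, ih]
    split_ifs <;> omega

namespace AddCommGroup

variable {G H : Type*} [AddCommGroup G] [AddCommGroup H] {p : ℕ}

theorem map_mem_primaryComponent (f : G →+ H) {x : G} (hx : x ∈ primaryComponent G p) :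
    f x ∈ primaryComponent H p := by
  obtain ⟨k, hk⟩ := mem_primaryComponent.mp hx
  exact mem_primaryComponent.mpr ⟨k, by rw [← map_nsmul, hk, map_zero]⟩

def primaryComponent.map (f : G →+ H) (p : ℕ) : primaryComponent G p →+ primaryComponent H p :=
  (f.domRestrict _).codRestrict _ fun x => map_mem_primaryComponent f x.2

theorem exists_mem_primaryComponent_map_eq (hp : p.Prime) (f : G →+ H) {x : G}
    (hx : IsOfFinAddOrder x) (hfx : f x ∈ primaryComponent H p) :
    ∃ z ∈ primaryComponent G p, f z = f x := by
  obtain ⟨j, hj⟩ := mem_primaryComponent.mp hfx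
  obtain ⟨e, m, hpm, hN⟩ :=
    Nat.exists_eq_pow_mul_and_not_dvd hx.addOrderOf_pos.ne' p hp.ne_one
  -- `p ^ (e + j)` kills both `(s * m) • x` and `f x`, while `s * m ≡ 1` modulo it.
  have hcop : IsCoprime (m : ℤ) ((p ^ (e + j) : ℕ) : ℤ) := Nat.isCoprime_iff_coprime.mpr
    (Nat.Coprime.pow_right _ ((Nat.Prime.coprime_iff_not_dvd hp).mpr hpm).symm)
  obtain ⟨s, t, hst⟩ := hcop
  refine ⟨(s * m) • x, mem_primaryComponent.mpr ⟨e + j, ?_⟩, ?_⟩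
  · rw [← natCast_zsmul, smul_smul, ← addOrderOf_dvd_iff_zsmul_eq_zero, hN]
    exact ⟨s * p ^ j, by push_cast; ring⟩
  · have hfx0 : ((p ^ (e + j) : ℕ) : ℤ) • f x = 0 := by
      rw [natCast_zsmul, pow_add, mul_nsmul', hj, nsmul_zero]
    calc f ((s * m) • x) = (s * m + t * (p ^ (e + j) : ℕ)) • f x := by
          rw [map_zsmul, add_smul, mul_smul t, hfx0, smul_zero, add_zero]
      _ = f x := by rw [hst, one_smul]

theorem primaryComponent.map_surjective (hp : p.Prime) {f : G →+ H} (hf : Surjective f)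
    (hker : ∀ x ∈ f.ker, IsOfFinAddOrder x) : Surjective (primaryComponent.map f p) := by
  rintro ⟨y, hy⟩
  obtain ⟨x, rfl⟩ := hf y
  obtain ⟨k, hk⟩ := mem_primaryComponent.mp hy
  have hx : IsOfFinAddOrder x := (hker _ (by rw [AddMonoidHom.mem_ker, map_nsmul, hk])).of_nsmul
    (pow_ne_zero k hp.ne_zero)
  obtain ⟨z, hz, hfz⟩ := exists_mem_primaryComponent_map_eq hp f hx hy
  exact ⟨⟨z, hz⟩, Subtype.ext hfz⟩

theorem primaryComponent.isAddCyclic_ker_map (f : G →+ H) [IsAddCyclic f.ker] :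
    IsAddCyclic (primaryComponent.map f p).ker :=
  isAddCyclic_of_injective
    (((primaryComponent G p).subtype.comp (primaryComponent.map f p).ker.subtype).codRestrict
      f.ker fun x => congrArg Subtype.val x.2)
    fun _ _ h => Subtype.ext (Subtype.ext congr($h.1))

end AddCommGroup

theorem AddSubgroup.card_map_mul_card_inf_ker {A B : Type*} [AddGroup A] [AddGroup B]
    (f : A →+ B) (H : AddSubgroup A) :
    Nat.card (H.map f) * Nat.card ↥(f.ker ⊓ H) = Nat.card H := by
  rw [← f.domRestrict_range, ← index_ker, f.ker_domRestrict, ← addSubgroupOf_map_subtype,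
    card_map_of_injective H.subtype_injective, mul_comm, card_mul_index]

section RangeNsmul

variable {A B : Type*} [AddCommGroup A] [AddCommGroup B]

theorem AddMonoidHom.map_range_nsmul_of_surjective {f : A →+ B} (hf : Surjective f) (n : ℕ) :
    (nsmulAddMonoidHom n : A →+ A).range.map f = (nsmulAddMonoidHom n).range := by
  ext y
  simp only [mem_map, AddMonoidHom.mem_range, nsmulAddMonoidHom_apply]
  constructor
  · rintro ⟨_, ⟨x, rfl⟩, rfl⟩
    exact ⟨f x, (map_nsmul f n x).symm⟩
  · rintro ⟨y, rfl⟩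
    obtain ⟨x, rfl⟩ := hf y
    exact ⟨n • x, ⟨x, rfl⟩, map_nsmul f n x⟩

theorem AddEquiv.card_range_nsmul_eq (e : A ≃+ B) (n : ℕ) :
    Nat.card (nsmulAddMonoidHom n : A →+ A).range =
      Nat.card (nsmulAddMonoidHom n : B →+ B).range := by
  rw [← e.toAddMonoidHom.map_range_nsmul_of_surjective e.surjective,
    card_map_of_injective e.injective]

theorem card_range_nsmul_pi {ι : Type*} [Fintype ι] (X : ι → Type*) [∀ i, AddCommGroup (X i)]
    (n : ℕ) :
    Nat.card (nsmulAddMonoidHom n : (Π i, X i) →+ _).range =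
      ∏ i, Nat.card (nsmulAddMonoidHom n : X i →+ X i).range := by
  have : ⇑(nsmulAddMonoidHom n : (Π i, X i) →+ _) = Pi.map fun i => ⇑(nsmulAddMonoidHom n) := rfl
  rw [← SetLike.coe_sort_coe, AddMonoidHom.coe_range, this, Set.range_piMap,
    Nat.card_congr (Equiv.Set.univPi _), Nat.card_pi]
  rfl

theorem ZMod.card_range_nsmul_pow {p : ℕ} (hp : p ≠ 0) (n k : ℕ) :
    Nat.card (nsmulAddMonoidHom (p ^ k) : ZMod (p ^ n) →+ _).range = p ^ (n - k) := by
  have : NeZero (p ^ n) := ⟨pow_ne_zero n hp⟩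
  have hgcd : (p ^ n).gcd (p ^ k) = p ^ min n k := by
    rcases le_total n k with h | h
    · rw [min_eq_left h, Nat.gcd_eq_left (pow_dvd_pow p h)]
    · rw [min_eq_right h, Nat.gcd_eq_right (pow_dvd_pow p h)]
  rw [IsAddCyclic.card_nsmulAddMonoidHom_range, Nat.card_zmod, hgcd,
    Nat.pow_div (min_le_left n k) (Nat.pos_of_ne_zero hp)]
  congr 1
  omega

theorem IsExpMultiset.finite {p : ℕ} {S : Multiset ℕ} (hp : p ≠ 0) (h : IsExpMultiset p A S) :
    Finite A := by
  obtain ⟨-, l, -, ⟨e⟩⟩ := h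
  have : ∀ i, NeZero (p ^ l.get i) := fun i => ⟨pow_ne_zero _ hp⟩
  exact Finite.of_equiv _ e.symm.toEquiv

theorem IsExpMultiset.card_range_nsmul {p : ℕ} {S : Multiset ℕ} (hp : p ≠ 0)
    (h : IsExpMultiset p A S) (k : ℕ) :
    Nat.card (nsmulAddMonoidHom (p ^ k) : A →+ A).range = p ^ (S.map (· - k)).sum := by
  obtain ⟨-, l, rfl, ⟨e⟩⟩ := h
  rw [e.card_range_nsmul_eq, card_range_nsmul_pi]
  simp_rw [ZMod.card_range_nsmul_pow hp]
  rw [Finset.prod_pow_eq_pow_sum, Multiset.map_coe, Multiset.sum_coe, ← Fin.sum_univ_fun_getElem]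
  rfl

theorem range_nsmul_pow_succ_le (p k : ℕ) :
    (nsmulAddMonoidHom (p ^ (k + 1)) : A →+ A).range ≤ (nsmulAddMonoidHom (p ^ k)).range :=
  fun _ ⟨y, hy⟩ => ⟨p • y, by
    simp only [nsmulAddMonoidHom_apply] at hy ⊢
    rw [← hy, smul_smul, pow_succ]⟩

theorem AddSubgroup.card_le_mul_card_of_nsmul_mem [Finite A] {H K : AddSubgroup A}
    [IsAddCyclic H] {n : ℕ} (hn : n ≠ 0) (h : ∀ x ∈ H, n • x ∈ K) :
    Nat.card H ≤ n * Nat.card K := by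
  obtain ⟨x, rfl⟩ := H.isAddCyclic_iff_exists_zmultiples_eq_top.mp ‹_›
  have hdvd : addOrderOf x ∣ n * addOrderOf (n • x) :=
    addOrderOf_dvd_of_nsmul_eq_zero (by rw [mul_nsmul, addOrderOf_nsmul_eq_zero])
  have hle : addOrderOf (n • x) ≤ Nat.card K := by
    rw [← Nat.card_zmultiples]
    exact card_le_of_le (zmultiples_le.mpr (h _ (mem_zmultiples x)))
  rw [Nat.card_zmultiples]
  calc addOrderOf x ≤ n * addOrderOf (n • x) :=
        Nat.le_of_dvd (Nat.mul_pos (Nat.pos_of_ne_zero hn)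
          (isOfFinAddOrder_of_finite _).addOrderOf_pos) hdvd
    _ ≤ n * Nat.card K := Nat.mul_le_mul_left n hle

theorem card_inf_range_nsmul_pow_le [Finite A] (K : AddSubgroup A) [IsAddCyclic K] {p : ℕ}
    (hp : p ≠ 0) (k : ℕ) :
    Nat.card ↥(K ⊓ (nsmulAddMonoidHom (p ^ k) : A →+ A).range) ≤
      p * Nat.card ↥(K ⊓ (nsmulAddMonoidHom (p ^ (k + 1)) : A →+ A).range) := by
  have := isAddCyclic_of_le (inf_le_left : K ⊓ (nsmulAddMonoidHom (p ^ k) : A →+ A).range ≤ K)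
  refine card_le_mul_card_of_nsmul_mem hp fun x ⟨hxK, y, hy⟩ => ⟨nsmul_mem hxK p, y, ?_⟩
  simp only [nsmulAddMonoidHom_apply] at hy ⊢
  rw [← hy, smul_smul, pow_succ']

theorem countP_succ_le_of_surjective {p : ℕ} (hp : p.Prime) {SA SB : Multiset ℕ}
    (hA : IsExpMultiset p A SA) (hB : IsExpMultiset p B SB) {f : A →+ B} (hf : Surjective f)
    [IsAddCyclic f.ker] (k : ℕ) :
    SB.countP (k + 1 ≤ ·) ≤ SA.countP (k + 1 ≤ ·) ∧
      SA.countP (k + 1 ≤ ·) ≤ SB.countP (k + 1 ≤ ·) + 1 := by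
  have := hA.finite hp.ne_zero
  have hexp : ∀ j, ∃ e, (SA.map (· - j)).sum = (SB.map (· - j)).sum + e ∧
      Nat.card ↥(f.ker ⊓ (nsmulAddMonoidHom (p ^ j) : A →+ A).range) = p ^ e := by
    intro j
    have hcard := card_map_mul_card_inf_ker f (nsmulAddMonoidHom (p ^ j) : A →+ A).range
    rw [f.map_range_nsmul_of_surjective hf, hA.card_range_nsmul hp.ne_zero,
      hB.card_range_nsmul hp.ne_zero] at hcard
    obtain ⟨e, -, he⟩ := (Nat.dvd_prime_pow hp).mp (Dvd.intro_left _ hcard)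
    refine ⟨e, Nat.pow_right_injective hp.two_le ?_, he⟩
    simp only [pow_add, ← he, hcard]
  obtain ⟨e, hAB, hce⟩ := hexp k
  obtain ⟨e', hAB', hce'⟩ := hexp (k + 1)
  have hmono := card_le_of_le (inf_le_inf_left f.ker (range_nsmul_pow_succ_le (A := A) p k))
  have hstep := card_inf_range_nsmul_pow_le f.ker hp.ne_zero k
  rw [hce, hce'] at hmono
  rw [hce, hce', ← pow_succ'] at hstep
  have := (Nat.pow_le_pow_iff_right hp.one_lt).mp hmono
  have := (Nat.pow_le_pow_iff_right hp.one_lt).mp hstep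
  have := SA.sum_map_tsub_eq_add_countP k
  have := SB.sum_map_tsub_eq_add_countP k
  omega

theorem countP_le_of_surjective {p : ℕ} (hp : p.Prime) {SA SB : Multiset ℕ}
    (hA : IsExpMultiset p A SA) (hB : IsExpMultiset p B SB) {f : A →+ B} (hf : Surjective f)
    [IsAddCyclic f.ker] (k : ℕ) :
    SB.countP (k ≤ ·) ≤ SA.countP (k ≤ ·) ∧ SA.countP (k ≤ ·) ≤ SB.countP (k ≤ ·) + 1 := by
  obtain _ | k := k
  · have hcount : ∀ {S : Multiset ℕ}, (∀ m ∈ S, 1 ≤ m) → S.countP (0 ≤ ·) = S.countP (1 ≤ ·) :=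
      fun hS => by
        rw [Multiset.countP_eq_card.mpr fun _ _ => Nat.zero_le _, Multiset.countP_eq_card.mpr hS]
    rw [hcount hA.1, hcount hB.1]
    exact countP_succ_le_of_surjective hp hA hB hf 0
  · exact countP_succ_le_of_surjective hp hA hB hf k

end RangeNsmul

theorem interleave_of_torsion_general (G : Type*) [AddCommGroup G] (g : G)
    (hg : IsOfFinAddOrder g) (p : ℕ) [Fact p.Prime] (SG SQ : Multiset ℕ)
    (hSG : IsExpMultiset p (AddCommGroup.primaryComponent G p) SG)
    (hSQ : IsExpMultiset p
      (AddCommGroup.primaryComponent (G ⧸ AddSubgroup.zmultiples g) p) SQ) :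
    Interleave (sortDesc (SG - SQ)) (sortDesc (SQ - SG)) := by
  have hp : p.Prime := Fact.out
  set π := QuotientAddGroup.mk' (zmultiples g)
  have hker : π.ker = zmultiples g := QuotientAddGroup.ker_mk' _
  have : IsAddCyclic π.ker := by rw [hker]; infer_instance
  have := AddCommGroup.primaryComponent.isAddCyclic_ker_map π (p := p)
  have hsurj := AddCommGroup.primaryComponent.map_surjective hp (QuotientAddGroup.mk'_surjective _)
    fun x hx => by
      obtain ⟨n, rfl⟩ := mem_zmultiples_iff.mp (hker ▸ hx)
      exact hg.zsmul
  exact interleave_sortDesc_sub_of_countP_le (countP_le_of_surjective hp hSG hSQ hsurj)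

/-- If `g` is a torsion element of the finitely generated abelian group `G`, then for
every prime `p` the pair `((G/ℤg)(p), G(p))` of `p`-primary components satisfies the
interleaving condition `(**)`: the leftover exponents (after removing the maximal common
sub-multiset, i.e. the multiset intersection) strictly interleave as
`b₁ > a₁ > b₂ > a₂ > ⋯`, with the `b`'s coming from `G(p)` and the `a`'s
from `(G/ℤg)(p)`. -/
theorem interleave_of_torsion (G : Type*) [AddCommGroup G] [AddGroup.FG G] (g : G)
    (hg : IsOfFinAddOrder g) (p : ℕ) [Fact p.Prime] (SG SQ : Multiset ℕ)
    (hSG : IsExpMultiset p (AddCommGroup.primaryComponent G p) SG)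
    (hSQ : IsExpMultiset p
      (AddCommGroup.primaryComponent (G ⧸ AddSubgroup.zmultiples g) p) SQ) :
    Interleave (sortDesc (SG - SQ)) (sortDesc (SQ - SG)) :=
  interleave_of_torsion_general G g hg p SG SQ hSG hSQ
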